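/- arXiv:2403.05392 — 5 statements merged into one kernel-verified Lean document; each statement's English description precedes it below -/
import Mathlib

section
/- Existence half of Lemma 1 (normalized to the unit sphere): Let A and B be unit vectors in ℝ³ with d = angle(A, B) ∈ (0, π), and let α ∈ (0, π) satisfy d ≤ α. Then there exist two distinct unit vectors C₁ ≠ C₂ such that for each i: angle(Cᵢ, A) = angle(Cᵢ, B) ≤ π/2, and the spherical angle at Cᵢ between A and B equals α. -/
open Real InnerProductGeometry RealInnerProductSpace

/-- The spherical angle at `u` between `v` and `w`: the angle between the tangential
components of `v` and `w` at `u`. -/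
noncomputable def sphAngle (u v w : EuclideanSpace ℝ (Fin 3)) : ℝ :=
  InnerProductGeometry.angle (v - ⟪v, u⟫ • u) (w - ⟪w, u⟫ • u)

set_option maxHeartbeats 1000000 in
/-- Existence half of Lemma 1: if the base `d = angle A B` satisfies `d ≤ α`, there are two
distinct apexes `C₁ ≠ C₂` of isosceles spherical triangles over base `AB` with apex angle `α`
and legs of spherical length at most `π/2`. -/
theorem isosceles_spherical_triangle_exists (A B : EuclideanSpace ℝ (Fin 3))
    (hA : ‖A‖ = 1) (hB : ‖B‖ = 1) (d α : ℝ) (hd : d = angle A B)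
    (hd0 : 0 < d) (hdπ : d < π) (hα0 : 0 < α) (hαπ : α < π) (hdα : d ≤ α) :
    ∃ C₁ C₂ : EuclideanSpace ℝ (Fin 3), C₁ ≠ C₂ ∧
      ‖C₁‖ = 1 ∧ ‖C₂‖ = 1 ∧
      angle C₁ A = angle C₁ B ∧ angle C₁ A ≤ π / 2 ∧ sphAngle C₁ A B = α ∧
      angle C₂ A = angle C₂ B ∧ angle C₂ A ≤ π / 2 ∧ sphAngle C₂ A B = α := by
  have hπ : (0:ℝ) < π := Real.pi_pos
  -- trigonometric setup
  have hsd : 0 < Real.sin (d/2) := Real.sin_pos_of_pos_of_lt_pi (by linarith) (by linarith)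
  have hsα : 0 < Real.sin (α/2) := Real.sin_pos_of_pos_of_lt_pi (by linarith) (by linarith)
  have hsα1 : Real.sin (α/2) < 1 := by
    have h := Real.strictMonoOn_sin (Set.mem_Icc.mpr ⟨by linarith, by linarith⟩)
      (Set.mem_Icc.mpr ⟨by linarith, le_refl (π/2)⟩) (show α/2 < π/2 by linarith)
    simpa using h
  have hsdα : Real.sin (d/2) ≤ Real.sin (α/2) := by
    rcases eq_or_lt_of_le hdα with h | h
    · rw [h]
    · exact le_of_lt (Real.strictMonoOn_sin (Set.mem_Icc.mpr ⟨by linarith, by linarith⟩)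
        (Set.mem_Icc.mpr ⟨by linarith, by linarith⟩) (show d/2 < α/2 by linarith))
  set s : ℝ := Real.sin (d/2) / Real.sin (α/2) with hs_def
  have hs0 : 0 < s := div_pos hsd hsα
  have hs1 : s ≤ 1 := (div_le_one hsα).mpr hsdα
  have hss : s * Real.sin (α/2) = Real.sin (d/2) := by
    rw [hs_def]; field_simp
  have hsgt : Real.sin (d/2) < s := by
    rw [hs_def, lt_div_iff₀ hsα]
    nlinarith
  set x : ℝ := Real.sqrt (1 - s^2) with hx_def
  have hx0 : 0 ≤ x := Real.sqrt_nonneg _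
  have hs2le : s^2 ≤ 1 := by
    have := pow_lt_pow_left₀ (a := s) (b := 1)
    nlinarith [mul_le_one₀ hs1 hs0.le hs1]
  have hx2 : x^2 = 1 - s^2 := Real.sq_sqrt (by linarith)
  set κ : ℝ := Real.cos d with hκ_def
  have hκd : κ = 1 - 2 * Real.sin (d/2)^2 := by
    have h1 := Real.sin_sq_add_cos_sq (d/2)
    have h2 : Real.cos d = 2 * Real.cos (d/2)^2 - 1 := by
      rw [show d = 2 * (d/2) by ring, Real.cos_two_mul]
      norm_num
    rw [hκ_def, h2]; linarith
  have hcα : Real.cos α = 1 - 2 * Real.sin (α/2)^2 := by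
    have h1 := Real.sin_sq_add_cos_sq (α/2)
    have h2 : Real.cos α = 2 * Real.cos (α/2)^2 - 1 := by
      rw [show α = 2 * (α/2) by ring, Real.cos_two_mul]
      norm_num
    rw [h2]; linarith
  have hcd2 : 0 < Real.cos (d/2) := Real.cos_pos_of_mem_Ioo ⟨by linarith, by linarith⟩
  have h1κ : (0:ℝ) < 1 + κ := by
    have h1 := Real.sin_sq_add_cos_sq (d/2)
    have h2 : 1 + κ = 2 * Real.cos (d/2)^2 := by rw [hκd]; linarith
    rw [h2]
    positivity
  have hxlt : x^2 < (1 + κ)/2 := by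
    have h2 : Real.sin (d/2)^2 < s^2 := pow_lt_pow_left₀ hsgt hsd.le (by norm_num)
    rw [hx2, hκd]
    linarith
  have key : κ - x^2 = (1 - x^2) * Real.cos α := by
    rw [hx2, hκd, hcα]
    linear_combination (2 * (s * Real.sin (α/2) + Real.sin (d/2))) * hss
  -- inner product of A and B
  have hAB : ⟪A, B⟫ = κ := by
    have h := InnerProductGeometry.cos_angle (x := A) (y := B)
    rw [hA, hB, ← hd] at h
    rw [hκ_def, h]; ring
  -- a unit vector orthogonal to A and B
  obtain ⟨P, hP1, hPA, hPB⟩ : ∃ P : EuclideanSpace ℝ (Fin 3),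
      ‖P‖ = 1 ∧ ⟪P, A⟫ = 0 ∧ ⟪P, B⟫ = 0 := by
    set W := (Submodule.span ℝ ({A, B} : Set (EuclideanSpace ℝ (Fin 3))))ᗮ with hW_def
    have hWne : W ≠ ⊥ := by
      intro hbot
      have h1 : Module.finrank ℝ (Submodule.span ℝ ({A, B} : Set (EuclideanSpace ℝ (Fin 3)))) ≤ 2 := by
        classical
        have h := finrank_span_finset_le_card (R := ℝ) ({A, B} : Finset (EuclideanSpace ℝ (Fin 3)))
        have hc : ({A, B} : Finset (EuclideanSpace ℝ (Fin 3))).card ≤ 2 :=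
          (Finset.card_insert_le _ _).trans (by simp)
        have hset : (({A, B} : Finset (EuclideanSpace ℝ (Fin 3))) : Set (EuclideanSpace ℝ (Fin 3)))
            = ({A, B} : Set (EuclideanSpace ℝ (Fin 3))) := by simp
        rw [Set.finrank, hset] at h
        exact h.trans hc
      have h2 := Submodule.finrank_add_finrank_orthogonal
        (K := Submodule.span ℝ ({A, B} : Set (EuclideanSpace ℝ (Fin 3))))
      rw [← hW_def, hbot] at h2
      simp [finrank_euclideanSpace] at h2
      omega
    obtain ⟨w, hwW, hw0⟩ := Submodule.exists_mem_ne_zero_of_ne_bot hWne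
    have hwn : ‖w‖ ≠ 0 := norm_ne_zero_iff.mpr hw0
    have horth : ∀ v ∈ Submodule.span ℝ ({A, B} : Set (EuclideanSpace ℝ (Fin 3))), ⟪v, w⟫ = 0 :=
      fun v hv => (Submodule.mem_orthogonal _ w).mp hwW v hv
    have hAmem : A ∈ Submodule.span ℝ ({A, B} : Set (EuclideanSpace ℝ (Fin 3))) :=
      Submodule.subset_span (by simp)
    have hBmem : B ∈ Submodule.span ℝ ({A, B} : Set (EuclideanSpace ℝ (Fin 3))) :=
      Submodule.subset_span (by simp)
    refine ⟨‖w‖⁻¹ • w, ?_, ?_, ?_⟩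
    · rw [norm_smul]; simp [hwn]
    · rw [real_inner_smul_left, real_inner_comm, horth A hAmem, mul_zero]
    · rw [real_inner_smul_left, real_inner_comm, horth B hBmem, mul_zero]
  -- the construction
  set lam : ℝ := x / (1 + κ) with hlam_def
  set μ : ℝ := Real.sqrt (1 - 2 * x^2 / (1 + κ)) with hμ_def
  have hμpos : 0 < μ := by
    apply Real.sqrt_pos.mpr
    rw [sub_pos, div_lt_one h1κ]
    linarith
  have hμ2 : μ^2 = 1 - 2 * x^2 / (1 + κ) := Real.sq_sqrt (by
    rw [sub_nonneg, div_le_one h1κ]; linarith)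
  have hAA : ⟪A, A⟫ = 1 := by rw [real_inner_self_eq_norm_sq, hA]; norm_num
  have hBB : ⟪B, B⟫ = 1 := by rw [real_inner_self_eq_norm_sq, hB]; norm_num
  have hPP : ⟪P, P⟫ = 1 := by rw [real_inner_self_eq_norm_sq, hP1]; norm_num
  have hBA : ⟪B, A⟫ = κ := by rw [real_inner_comm]; exact hAB
  have hAP : ⟪A, P⟫ = 0 := by rw [real_inner_comm]; exact hPA
  have hBP : ⟪B, P⟫ = 0 := by rw [real_inner_comm]; exact hPB
  have hs2 : 1 - x^2 = s^2 := by linarith [hx2]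
  have hlκ : lam * (1 + κ) = x := by rw [hlam_def]; field_simp
  have hCCs : lam^2 * (2 + 2*κ) + μ^2 = 1 := by
    rw [hlam_def, hμ2]; field_simp; ring
  -- main claim for a generic choice of sign
  have main : ∀ m : ℝ, m^2 = μ^2 →
      (‖(lam • (A + B) + m • P : EuclideanSpace ℝ (Fin 3))‖ = 1 ∧
       angle (lam • (A + B) + m • P) A = angle (lam • (A + B) + m • P) B ∧
       angle (lam • (A + B) + m • P) A ≤ π / 2 ∧
       sphAngle (lam • (A + B) + m • P) A B = α) := by
    intro m hm
    set C : EuclideanSpace ℝ (Fin 3) := lam • (A + B) + m • P with hC_def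
    have hCA : ⟪C, A⟫ = x := by
      rw [hC_def]
      simp only [inner_add_left, real_inner_smul_left, hAA, hBA, hPA]
      linear_combination hlκ
    have hCB : ⟪C, B⟫ = x := by
      rw [hC_def]
      simp only [inner_add_left, real_inner_smul_left, hAB, hBB, hPB]
      linear_combination hlκ
    have hCC : ⟪C, C⟫ = 1 := by
      rw [hC_def]
      simp only [inner_add_left, inner_add_right, real_inner_smul_left, real_inner_smul_right,
        hAA, hBB, hAB, hBA, hPP, hPA, hPB, hAP, hBP]
      linear_combination hCCs + hm
    have hnC : ‖C‖ = 1 := by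
      rw [norm_eq_sqrt_real_inner, hCC, Real.sqrt_one]
    have hangA : angle C A = Real.arccos x := by
      rw [InnerProductGeometry.angle, hCA, hnC, hA]; norm_num
    have hangB : angle C B = Real.arccos x := by
      rw [InnerProductGeometry.angle, hCB, hnC, hB]; norm_num
    have hAC : ⟪A, C⟫ = x := by rw [real_inner_comm]; exact hCA
    have hBC : ⟪B, C⟫ = x := by rw [real_inner_comm]; exact hCB
    refine ⟨hnC, by rw [hangA, hangB], ?_, ?_⟩
    · rw [hangA]; exact Real.arccos_le_pi_div_two.mpr hx0
    · rw [sphAngle, hAC, hBC]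
      set v' : EuclideanSpace ℝ (Fin 3) := A - x • C with hv_def
      set w' : EuclideanSpace ℝ (Fin 3) := B - x • C with hw_def
      have hvw : ⟪v', w'⟫ = κ - x^2 := by
        rw [hv_def, hw_def]
        simp only [inner_sub_left, inner_sub_right, real_inner_smul_left, real_inner_smul_right,
          hAB, hAC, hBC, hCA, hCB, hCC]
        ring
      have hvv : ⟪v', v'⟫ = s^2 := by
        rw [hv_def]
        simp only [inner_sub_left, inner_sub_right, real_inner_smul_left, real_inner_smul_right,
          hAA, hAC, hCA, hCC]
        linear_combination hs2
      have hww : ⟪w', w'⟫ = s^2 := by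
        rw [hw_def]
        simp only [inner_sub_left, inner_sub_right, real_inner_smul_left, real_inner_smul_right,
          hBB, hBC, hCB, hCC]
        linear_combination hs2
      have hnv : ‖v'‖ = s := by
        rw [norm_eq_sqrt_real_inner, hvv, Real.sqrt_sq hs0.le]
      have hnw : ‖w'‖ = s := by
        rw [norm_eq_sqrt_real_inner, hww, Real.sqrt_sq hs0.le]
      rw [InnerProductGeometry.angle, hvw, hnv, hnw, key, hs2]
      rw [show s^2 * Real.cos α / (s * s) = Real.cos α by field_simp]
      exact Real.arccos_cos hα0.le hαπ.le
  obtain ⟨hn1, he1, hl1, hs1'⟩ := main μ rfl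
  obtain ⟨hn2, he2, hl2, hs2'⟩ := main (-μ) (by ring)
  refine ⟨lam • (A + B) + μ • P, lam • (A + B) + (-μ) • P, ?_, hn1, hn2, he1, hl1, hs1', he2, hl2, hs2'⟩
  intro h
  have h3 : μ • P = (-μ) • P := add_left_cancel h
  have h2 : (μ - -μ) • P = 0 := by rw [sub_smul, h3, sub_self]
  rw [smul_eq_zero] at h2
  rcases h2 with h2 | h2
  · linarith [hμpos]
  · rw [h2] at hP1; simp at hP1
end

section
/- Nonexistence half of Lemma 1 (normalized to the unit sphere): Let A and B be unit vectors in ℝ³ with d = angle(A, B) ∈ (0, π), and let α ∈ (0, π) satisfy d > α. Then there is no unit vector C, not parallel to A or to B, with angle(C, A) = angle(C, B) and spherical angle at C between A and B equal to α. -/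
open Real InnerProductGeometry RealInnerProductSpace

/-!
Spherical law of cosines at the apex `C` of the triangle: with `c = ⟪A, C⟫ = ⟪B, C⟫`,
`cos d = c² + (1 - c²) cos α`, and the right-hand side is at least `cos α`. Since `cos` is
decreasing on `[0, π]`, this gives `d ≤ α`.
-/

section SphericalLawOfCosines

variable {E : Type*} [NormedAddCommGroup E] [InnerProductSpace ℝ E] {u : E}

lemma inner_sub_inner_smul_sub_inner_smul (hu : ‖u‖ = 1) (v w : E) :
    ⟪v - ⟪v, u⟫ • u, w - ⟪w, u⟫ • u⟫ = ⟪v, w⟫ - ⟪v, u⟫ * ⟪w, u⟫ := by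
  have huu : ⟪u, u⟫ = 1 := by rw [real_inner_self_eq_norm_sq, hu, one_pow]
  simp only [inner_sub_left, inner_sub_right, real_inner_smul_left, real_inner_smul_right, huu,
    real_inner_comm u]
  ring

lemma norm_sub_inner_smul_sq (hu : ‖u‖ = 1) (v : E) :
    ‖v - ⟪v, u⟫ • u‖ ^ 2 = ‖v‖ ^ 2 - ⟪v, u⟫ ^ 2 := by
  rw [← real_inner_self_eq_norm_sq, inner_sub_inner_smul_sub_inner_smul hu,
    real_inner_self_eq_norm_sq]
  ring

/-- Spherical law of cosines: the norms of the tangential components are the sines of the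
sides `uv` and `uw`. -/
lemma inner_eq_inner_mul_inner_add_norm_mul_norm_mul_cos_angle (hu : ‖u‖ = 1) (v w : E) :
    ⟪v, w⟫ = ⟪v, u⟫ * ⟪w, u⟫ +
      ‖v - ⟪v, u⟫ • u‖ * ‖w - ⟪w, u⟫ • u‖ * cos (angle (v - ⟪v, u⟫ • u) (w - ⟪w, u⟫ • u)) := by
  rw [mul_comm _ (cos _), cos_angle_mul_norm_mul_norm, inner_sub_inner_smul_sub_inner_smul hu]
  ring

lemma inner_eq_sq_add_mul_cos_angle_of_inner_eq (hu : ‖u‖ = 1) {v w : E} (hv : ‖v‖ = 1)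
    (hw : ‖w‖ = 1) (h : ⟪v, u⟫ = ⟪w, u⟫) :
    ⟪v, w⟫ = ⟪v, u⟫ ^ 2 +
      (1 - ⟪v, u⟫ ^ 2) * cos (angle (v - ⟪v, u⟫ • u) (w - ⟪w, u⟫ • u)) := by
  have hnorm : ‖v - ⟪v, u⟫ • u‖ = ‖w - ⟪w, u⟫ • u‖ := by
    rw [← sq_eq_sq₀ (norm_nonneg _) (norm_nonneg _), norm_sub_inner_smul_sq hu,
      norm_sub_inner_smul_sq hu, hv, hw, h]
  rw [inner_eq_inner_mul_inner_add_norm_mul_norm_mul_cos_angle hu, ← hnorm, ← sq,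
    norm_sub_inner_smul_sq hu, hv, one_pow, ← h, sq]

end SphericalLawOfCosines

lemma angle_le_sphAngle_of_angle_eq {u v w : EuclideanSpace ℝ (Fin 3)} (hu : ‖u‖ = 1)
    (hv : ‖v‖ = 1) (hw : ‖w‖ = 1) (h : angle u v = angle u w) :
    angle v w ≤ sphAngle u v w := by
  have hinner : ⟪v, u⟫ = ⟪w, u⟫ := by
    rw [real_inner_comm, real_inner_comm u, inner_eq_cos_angle_of_norm_eq_one hu hv,
      inner_eq_cos_angle_of_norm_eq_one hu hw, h]
  have hcos : cos (sphAngle u v w) ≤ cos (angle v w) := by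
    rw [← inner_eq_cos_angle_of_norm_eq_one hv hw,
      inner_eq_sq_add_mul_cos_angle_of_inner_eq hu hv hw hinner, sphAngle]
    nlinarith [sq_nonneg ⟪v, u⟫, cos_le_one (angle (v - ⟪v, u⟫ • u) (w - ⟪w, u⟫ • u))]
  exact (strictAntiOn_cos.le_iff_ge ⟨angle_nonneg _ _, angle_le_pi _ _⟩
    ⟨angle_nonneg _ _, angle_le_pi _ _⟩).mp hcos

theorem isosceles_spherical_triangle_not_exists_general (A B : EuclideanSpace ℝ (Fin 3))
    (hA : ‖A‖ = 1) (hB : ‖B‖ = 1) (d α : ℝ) (hd : d = angle A B)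
    (hdα : d > α) :
    ¬ ∃ C : EuclideanSpace ℝ (Fin 3), ‖C‖ = 1 ∧
      C ≠ A ∧ C ≠ -A ∧ C ≠ B ∧ C ≠ -B ∧
      angle C A = angle C B ∧ sphAngle C A B = α := by
  rintro ⟨C, hC, -, -, -, -, hiso, rfl⟩
  exact (angle_le_sphAngle_of_angle_eq hC hA hB hiso).not_gt (hd ▸ hdα)

/-- Nonexistence half of Lemma 1: if the base `d = angle A B` satisfies `d > α`, there is no
apex `C` of an isosceles spherical triangle over base `AB` with apex angle `α`. -/
theorem isosceles_spherical_triangle_not_exists (A B : EuclideanSpace ℝ (Fin 3))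
    (hA : ‖A‖ = 1) (hB : ‖B‖ = 1) (d α : ℝ) (hd : d = angle A B)
    (hd0 : 0 < d) (hdπ : d < π) (hα0 : 0 < α) (hαπ : α < π) (hdα : d > α) :
    ¬ ∃ C : EuclideanSpace ℝ (Fin 3), ‖C‖ = 1 ∧
      C ≠ A ∧ C ≠ -A ∧ C ≠ B ∧ C ≠ -B ∧
      angle C A = angle C B ∧ sphAngle C A B = α :=
  isosceles_spherical_triangle_not_exists_general A B hA hB d α hd hdα
end

section
/- Boundary case of Lemma 1: Let A and B be unit vectors in ℝ³ with d = angle(A, B) ∈ (0, π) and let α = d. Then a unit vector C (not parallel to A or B) satisfies angle(C, A) = angle(C, B) with spherical angle at C between A and B equal to α if and only if ⟪C, A⟫ = 0 and ⟪C, B⟫ = 0; and there are exactly two such unit vectors, namely ± (A × B)/‖A × B‖. -/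
open Real InnerProductGeometry RealInnerProductSpace

/-- The cross product on `EuclideanSpace ℝ (Fin 3)`. -/
noncomputable def cross (x y : EuclideanSpace ℝ (Fin 3)) : EuclideanSpace ℝ (Fin 3) :=
  (WithLp.equiv 2 (Fin 3 → ℝ)).symm ![x 1 * y 2 - x 2 * y 1, x 2 * y 0 - x 0 * y 2, x 0 * y 1 - x 1 * y 0]

lemma inner3 (x y : EuclideanSpace ℝ (Fin 3)) : ⟪x, y⟫ = x 0 * y 0 + x 1 * y 1 + x 2 * y 2 := by
  simp [PiLp.inner_apply, Fin.sum_univ_three, RCLike.inner_apply]; ring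

lemma cross0 (x y : EuclideanSpace ℝ (Fin 3)) : cross x y 0 = x 1 * y 2 - x 2 * y 1 := by
  simp [cross]
lemma cross1 (x y : EuclideanSpace ℝ (Fin 3)) : cross x y 1 = x 2 * y 0 - x 0 * y 2 := by
  simp [cross]
lemma cross2 (x y : EuclideanSpace ℝ (Fin 3)) : cross x y 2 = x 0 * y 1 - x 1 * y 0 := by
  simp [cross]

lemma cross_inner_left (x y : EuclideanSpace ℝ (Fin 3)) : ⟪cross x y, x⟫ = 0 := by
  rw [inner3, cross0, cross1, cross2]; ring

lemma cross_inner_right (x y : EuclideanSpace ℝ (Fin 3)) : ⟪cross x y, y⟫ = 0 := by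
  rw [inner3, cross0, cross1, cross2]; ring

lemma lagrange (x y : EuclideanSpace ℝ (Fin 3)) :
    ⟪cross x y, cross x y⟫ = ⟪x, x⟫ * ⟪y, y⟫ - ⟪x, y⟫ ^ 2 := by
  simp only [inner3, cross0, cross1, cross2]; ring

lemma lagrange2 (x y z : EuclideanSpace ℝ (Fin 3)) :
    ⟪z, z⟫ * ⟪cross x y, cross x y⟫ - ⟪z, cross x y⟫ ^ 2 =
      ⟪z, y⟫ ^ 2 * ⟪x, x⟫ - 2 * ⟪z, x⟫ * ⟪z, y⟫ * ⟪x, y⟫ + ⟪z, x⟫ ^ 2 * ⟪y, y⟫ := by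
  simp only [inner3, cross0, cross1, cross2]; ring

lemma sph_key_iff (A B C : EuclideanSpace ℝ (Fin 3)) (hA : ‖A‖ = 1) (hB : ‖B‖ = 1)
    (hC : ‖C‖ = 1) (hc1 : ⟪A, B⟫ < 1)
    (h1 : C ≠ A) (h2 : C ≠ -A) :
    (angle C A = angle C B ∧ sphAngle C A B = angle A B) ↔ (⟪C, A⟫ = 0 ∧ ⟪C, B⟫ = 0) := by
  have hCC : ⟪C, C⟫ = 1 := by rw [real_inner_self_eq_norm_sq, hC]; norm_num
  constructor
  · rintro ⟨hang, hsph⟩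
    set a := ⟪C, A⟫ with ha
    set b := ⟪C, B⟫ with hb
    have hAC : ⟪A, C⟫ = a := (real_inner_comm A C).symm
    have hBC : ⟪B, C⟫ = b := (real_inner_comm B C).symm
    have ha1 : a < 1 := (inner_lt_one_iff_real_of_norm_eq_one hC hA).2 h1
    have ha2 : -1 < a := by
      have := (inner_lt_one_iff_real_of_norm_eq_one hC (by rw [norm_neg, hA])).2 h2
      rw [inner_neg_right] at this; linarith
    have hab : a = b := by
      have := congrArg Real.cos hang
      simp only [cos_angle, hC, hA, hB, mul_one, div_one] at this
      exact this
    have hpos : (0:ℝ) < 1 - a ^ 2 := by nlinarith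
    have hnA : ‖A - a • C‖ ^ 2 = 1 - a ^ 2 := by
      rw [norm_sub_sq_real, real_inner_smul_right, hAC, norm_smul, hA, hC, mul_one,
        Real.norm_eq_abs, sq_abs]
      ring
    have hnB : ‖B - b • C‖ ^ 2 = 1 - b ^ 2 := by
      rw [norm_sub_sq_real, real_inner_smul_right, hBC, norm_smul, hB, hC, mul_one,
        Real.norm_eq_abs, sq_abs]
      ring
    have hnA' : ‖A - a • C‖ = Real.sqrt (1 - a ^ 2) := by
      rw [← hnA, Real.sqrt_sq (norm_nonneg _)]
    have hnB' : ‖B - b • C‖ = Real.sqrt (1 - b ^ 2) := by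
      rw [← hnB, Real.sqrt_sq (norm_nonneg _)]
    have hinAB : ⟪A - a • C, B - b • C⟫ = ⟪A, B⟫ - a * b := by
      simp only [inner_sub_left, inner_sub_right, real_inner_smul_left, real_inner_smul_right,
        hAC, hBC, hCC, ← hb]
      ring
    have hcos := congrArg Real.cos hsph
    rw [sphAngle] at hcos
    have hAC' : ⟪A, C⟫ • C = a • C := by rw [hAC]
    have hBC' : ⟪B, C⟫ • C = b • C := by rw [hBC]
    rw [hAC', hBC'] at hcos
    simp only [cos_angle, hA, hB, mul_one, div_one, hinAB, hnA', hnB'] at hcos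
    rw [← hab, Real.mul_self_sqrt (le_of_lt hpos)] at hcos
    have h' : ⟪A, B⟫ - a * a = ⟪A, B⟫ * (1 - a ^ 2) := by
      rw [div_eq_iff (ne_of_gt hpos)] at hcos
      linarith [hcos]
    have hz : a ^ 2 * (1 - ⟪A, B⟫) = 0 := by nlinarith [h']
    have h2' : a ^ 2 = 0 := by
      rcases mul_eq_zero.1 hz with h | h
      · exact h
      · exfalso; linarith
    have ha0 : a = 0 := by
      exact pow_eq_zero_iff (n := 2) (by norm_num) |>.1 h2'
    exact ⟨ha0, by rw [← hab]; exact ha0⟩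
  · rintro ⟨hCA, hCB⟩
    have hAC : ⟪A, C⟫ = 0 := by rw [real_inner_comm]; exact hCA
    have hBC : ⟪B, C⟫ = 0 := by rw [real_inner_comm]; exact hCB
    constructor
    · unfold InnerProductGeometry.angle
      rw [hCA, hCB]
      simp
    · rw [sphAngle, hAC, hBC, zero_smul, sub_zero, sub_zero]


/-- Boundary case of Lemma 1 (`α = d`): the apexes of isosceles spherical triangles over base
`AB` with apex angle `d = angle A B` are exactly the two unit normals `±(A × B)/‖A × B‖` of the
plane `OAB`. -/
theorem isosceles_spherical_triangle_boundary (A B : EuclideanSpace ℝ (Fin 3))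
    (hA : ‖A‖ = 1) (hB : ‖B‖ = 1) (d α : ℝ) (hd : d = angle A B)
    (hd0 : 0 < d) (hdπ : d < π) (hα : α = d) :
    (∀ C : EuclideanSpace ℝ (Fin 3), ‖C‖ = 1 →
      C ≠ A → C ≠ -A → C ≠ B → C ≠ -B →
      ((angle C A = angle C B ∧ sphAngle C A B = α) ↔ (⟪C, A⟫ = 0 ∧ ⟪C, B⟫ = 0))) ∧
    {C : EuclideanSpace ℝ (Fin 3) | ‖C‖ = 1 ∧
        C ≠ A ∧ C ≠ -A ∧ C ≠ B ∧ C ≠ -B ∧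
        angle C A = angle C B ∧ sphAngle C A B = α} =
      {‖cross A B‖⁻¹ • cross A B, -(‖cross A B‖⁻¹ • cross A B)} := by
  have hα' : α = angle A B := hα.trans hd
  have hA0 : A ≠ 0 := fun h => by rw [h] at hA; simp at hA
  have hB0 : B ≠ 0 := fun h => by rw [h] at hB; simp at hB
  have hAA : ⟪A, A⟫ = 1 := by rw [real_inner_self_eq_norm_sq, hA]; norm_num
  have hBB : ⟪B, B⟫ = 1 := by rw [real_inner_self_eq_norm_sq, hB]; norm_num
  have hABne : A ≠ B := by
    intro h; rw [h, angle_self hB0] at hd; linarith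
  have hABne' : A ≠ -B := by
    intro h
    rw [h] at hd
    rw [show angle (-B) B = π from angle_neg_self_of_nonzero hB0] at hd
    linarith
  have hc1 : ⟪A, B⟫ < 1 := (inner_lt_one_iff_real_of_norm_eq_one hA hB).2 hABne
  have hc2 : -1 < ⟪A, B⟫ := by
    have := (inner_lt_one_iff_real_of_norm_eq_one hA (by rw [norm_neg, hB])).2 hABne'
    rw [inner_neg_right] at this; linarith
  have hNN : ⟪cross A B, cross A B⟫ = 1 - ⟪A, B⟫ ^ 2 := by
    rw [lagrange, hAA, hBB]; ring
  have hNpos : 0 < ⟪cross A B, cross A B⟫ := by rw [hNN]; nlinarith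
  have hNne : cross A B ≠ 0 := by
    intro h; rw [h, inner_zero_left] at hNpos; linarith
  have hN0 : 0 < ‖cross A B‖ := norm_pos_iff.2 hNne
  have hNsq : ‖cross A B‖ ^ 2 = ⟪cross A B, cross A B⟫ :=
    (real_inner_self_eq_norm_sq _).symm
  -- membership of the solution set for orthogonal unit vectors
  have orth_mem : ∀ C : EuclideanSpace ℝ (Fin 3), ‖C‖ = 1 → ⟪C, A⟫ = 0 → ⟪C, B⟫ = 0 →
      C ∈ {C : EuclideanSpace ℝ (Fin 3) | ‖C‖ = 1 ∧
        C ≠ A ∧ C ≠ -A ∧ C ≠ B ∧ C ≠ -B ∧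
        angle C A = angle C B ∧ sphAngle C A B = α} := by
    intro C hC hCA hCB
    have e1 : C ≠ A := by intro h; rw [h, hAA] at hCA; linarith
    have e2 : C ≠ -A := by
      intro h; rw [h, inner_neg_left, hAA] at hCA; linarith
    have e3 : C ≠ B := by intro h; rw [h, hBB] at hCB; linarith
    have e4 : C ≠ -B := by
      intro h; rw [h, inner_neg_left, hBB] at hCB; linarith
    obtain ⟨g1, g2⟩ := (sph_key_iff A B C hA hB hC hc1 e1 e2).2 ⟨hCA, hCB⟩
    exact ⟨hC, e1, e2, e3, e4, g1, by rw [g2, hα']⟩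
  constructor
  · intro C hC e1 e2 _ _
    rw [hα']
    exact sph_key_iff A B C hA hB hC hc1 e1 e2
  · ext C
    simp only [Set.mem_insert_iff, Set.mem_singleton_iff]
    constructor
    · rintro ⟨hC, e1, e2, e3, e4, g1, g2⟩
      obtain ⟨hCA, hCB⟩ := (sph_key_iff A B C hA hB hC hc1 e1 e2).1 ⟨g1, g2.trans hα'⟩
      have hCC : ⟪C, C⟫ = 1 := by rw [real_inner_self_eq_norm_sq, hC]; norm_num
      have hs2 : ⟪C, cross A B⟫ ^ 2 = ⟪cross A B, cross A B⟫ := by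
        have := lagrange2 A B C
        rw [hCA, hCB, hCC] at this
        nlinarith [this]
      set s := ⟪C, cross A B⟫ with hs
      set t := s / ⟪cross A B, cross A B⟫ with ht
      have hNC : ⟪cross A B, C⟫ = s := (real_inner_comm (cross A B) C).symm ▸ rfl
      have hz : ⟪C - t • cross A B, C - t • cross A B⟫ = 0 := by
        have expand : ⟪C - t • cross A B, C - t • cross A B⟫ =
            1 - 2 * t * s + t ^ 2 * ⟪cross A B, cross A B⟫ := by
          simp only [inner_sub_left, inner_sub_right, real_inner_smul_left,
            real_inner_smul_right, hCC, hNC, ← hs]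
          ring
        have e1 : t * s = 1 := by
          rw [ht, div_mul_eq_mul_div, ← sq, hs2, div_self (ne_of_gt hNpos)]
        have e2 : t ^ 2 * ⟪cross A B, cross A B⟫ = 1 := by
          have e3 : t ^ 2 * ⟪cross A B, cross A B⟫ = t * (t * ⟪cross A B, cross A B⟫) := by
            ring
          rw [e3, ht, div_mul_cancel₀ _ (ne_of_gt hNpos), ← ht, e1]
        rw [expand, e2]
        linarith [e1]
      have hCtN : C = t • cross A B := by
        have := inner_self_eq_zero.1 hz
        exact sub_eq_zero.1 this
      have hfac : (s - ‖cross A B‖) * (s + ‖cross A B‖) = 0 := by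
        nlinarith [hs2, hNsq]
      rcases mul_eq_zero.1 hfac with h | h
      · left
        have hts : t = ‖cross A B‖⁻¹ := by
          rw [ht, ← hNsq, show s = ‖cross A B‖ from by linarith, pow_two, ← div_div,
            div_self (ne_of_gt hN0), one_div]
        rw [hCtN, hts]
      · right
        have hts : t = -‖cross A B‖⁻¹ := by
          rw [ht, ← hNsq, show s = -‖cross A B‖ from by linarith, pow_two, neg_div,
            ← div_div, div_self (ne_of_gt hN0), one_div]
        rw [hCtN, hts, neg_smul]
    · intro h
      have hNA : ⟪cross A B, A⟫ = 0 := cross_inner_left A B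
      have hNB : ⟪cross A B, B⟫ = 0 := cross_inner_right A B
      have hnunit : ‖‖cross A B‖⁻¹ • cross A B‖ = 1 := by
        rw [norm_smul, norm_inv, norm_norm, inv_mul_cancel₀ (ne_of_gt hN0)]
      rcases h with h | h
      · refine h ▸ orth_mem _ hnunit ?_ ?_
        · rw [real_inner_smul_left, hNA, mul_zero]
        · rw [real_inner_smul_left, hNB, mul_zero]
      · refine h ▸ orth_mem _ (by rw [norm_neg]; exact hnunit) ?_ ?_
        · rw [inner_neg_left, real_inner_smul_left, hNA, mul_zero, neg_zero]
        · rw [inner_neg_left, real_inner_smul_left, hNB, mul_zero, neg_zero]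
end

section
/- Paths joining antipodal points on a sphere are long: Let r > 0 and let γ : [a, b] → ℝ³ (EuclideanSpace ℝ (Fin 3)) be a continuous path with ‖γ t‖ = r for all t ∈ [a, b], and suppose γ b = −(γ a). Then the length of γ (its total variation eVariationOn γ [a, b]) is at least π r. -/
set_option maxHeartbeats 1000000


open Real

open scoped RealInnerProductSpace

/-- Spherical triangle inequality for angles between unit vectors. -/
theorem aux_angle_triangle {V : Type*} [NormedAddCommGroup V] [InnerProductSpace ℝ V]
    {x y z : V} (hx : ‖x‖ = 1) (hy : ‖y‖ = 1) (hz : ‖z‖ = 1) :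
    InnerProductGeometry.angle x z ≤ InnerProductGeometry.angle x y + InnerProductGeometry.angle y z := by
  set α := InnerProductGeometry.angle x y with hα
  set β := InnerProductGeometry.angle y z with hβ
  have hα0 : 0 ≤ α := InnerProductGeometry.angle_nonneg x y
  have hαπ : α ≤ π := InnerProductGeometry.angle_le_pi x y
  have hβ0 : 0 ≤ β := InnerProductGeometry.angle_nonneg y z
  have hβπ : β ≤ π := InnerProductGeometry.angle_le_pi y z
  have hcosα : Real.cos α = ⟪x, y⟫ := by
    rw [hα, InnerProductGeometry.cos_angle, hx, hy]; ring_nf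
  have hcosβ : Real.cos β = ⟪y, z⟫ := by
    rw [hβ, InnerProductGeometry.cos_angle, hy, hz]; ring_nf
  have hsinα : Real.sin α = Real.sqrt (1 - ⟪x, y⟫ ^ 2) := by
    rw [Real.sin_eq_sqrt_one_sub_cos_sq hα0 hαπ, hcosα]
  have hsinβ : Real.sin β = Real.sqrt (1 - ⟪y, z⟫ ^ 2) := by
    rw [Real.sin_eq_sqrt_one_sub_cos_sq hβ0 hβπ, hcosβ]
  -- key inner product bound
  have key : Real.cos (α + β) ≤ ⟪x, z⟫ := by
    set p := x - ⟪x, y⟫ • y with hp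
    set q := z - ⟪y, z⟫ • y with hq
    have hyy : ⟪y, y⟫ = (1 : ℝ) := by
      rw [real_inner_self_eq_norm_sq, hy]; norm_num
    have hpq : ⟪p, q⟫ = ⟪x, z⟫ - ⟪x, y⟫ * ⟪y, z⟫ := by
      simp only [hp, hq, inner_sub_left, inner_sub_right, inner_smul_left, inner_smul_right,
        RCLike.conj_to_real, hyy]
      rw [real_inner_comm y x]
      ring
    have hpn : ‖p‖ ^ 2 = 1 - ⟪x, y⟫ ^ 2 := by
      rw [← real_inner_self_eq_norm_sq]
      simp only [hp, inner_sub_left, inner_sub_right, inner_smul_left, inner_smul_right,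
        RCLike.conj_to_real, hyy]
      rw [real_inner_comm y x, real_inner_self_eq_norm_sq, hx]
      ring
    have hqn : ‖q‖ ^ 2 = 1 - ⟪y, z⟫ ^ 2 := by
      rw [← real_inner_self_eq_norm_sq]
      simp only [hq, inner_sub_left, inner_sub_right, inner_smul_left, inner_smul_right,
        RCLike.conj_to_real, hyy]
      rw [real_inner_comm y z, real_inner_self_eq_norm_sq, hz]
      ring
    have hpnorm : ‖p‖ = Real.sqrt (1 - ⟪x, y⟫ ^ 2) := by
      rw [← hpn, Real.sqrt_sq (norm_nonneg p)]
    have hqnorm : ‖q‖ = Real.sqrt (1 - ⟪y, z⟫ ^ 2) := by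
      rw [← hqn, Real.sqrt_sq (norm_nonneg q)]
    have hCS : -(‖p‖ * ‖q‖) ≤ ⟪p, q⟫ := neg_le_of_abs_le (abs_real_inner_le_norm p q)
    rw [Real.cos_add, hcosα, hcosβ, hsinα, hsinβ, ← hpnorm, ← hqnorm]
    nlinarith [hpq, hCS]
  by_cases h : α + β ≤ π
  · have hangle : InnerProductGeometry.angle x z = Real.arccos ⟪x, z⟫ := by
      rw [InnerProductGeometry.angle, hx, hz]; norm_num
    rw [hangle]
    calc Real.arccos ⟪x, z⟫ ≤ Real.arccos (Real.cos (α + β)) := by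
          rw [Real.arccos_eq_pi_div_two_sub_arcsin, Real.arccos_eq_pi_div_two_sub_arcsin]
          have := Real.monotone_arcsin key
          linarith
      _ = α + β := Real.arccos_cos (by linarith) h
  · exact le_trans (InnerProductGeometry.angle_le_pi x z) (le_of_not_ge h)

/-- Spherical triangle inequality for vectors of common norm `r`. -/
theorem aux_angle_triangle_r {V : Type*} [NormedAddCommGroup V] [InnerProductSpace ℝ V]
    {r : ℝ} (hr : 0 < r) {x y z : V} (hx : ‖x‖ = r) (hy : ‖y‖ = r) (hz : ‖z‖ = r) :
    InnerProductGeometry.angle x z ≤ InnerProductGeometry.angle x y + InnerProductGeometry.angle y z := by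
  have hrne : (r : ℝ)⁻¹ ≠ 0 := inv_ne_zero hr.ne'
  have hnorm : ∀ w : V, ‖w‖ = r → ‖r⁻¹ • w‖ = 1 := by
    intro w hw
    rw [norm_smul, Real.norm_eq_abs, abs_of_pos (inv_pos.mpr hr), hw]
    field_simp
  have h1 := aux_angle_triangle (hnorm x hx) (hnorm y hy) (hnorm z hz)
  rwa [InnerProductGeometry.angle_smul_smul hrne, InnerProductGeometry.angle_smul_smul hrne,
    InnerProductGeometry.angle_smul_smul hrne] at h1

/-- Chord length lower bound for two points on a sphere with given angular separation. -/
theorem aux_chord_ge {V : Type*} [NormedAddCommGroup V] [InnerProductSpace ℝ V]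
    {r : ℝ} (hr : 0 < r) {x y : V} (hx : ‖x‖ = r) (hy : ‖y‖ = r)
    {θ : ℝ} (hθ0 : 0 ≤ θ) (hθ : θ ≤ InnerProductGeometry.angle x y) :
    2 * r * Real.sin (θ / 2) ≤ ‖x - y‖ := by
  have hθπ : θ ≤ π := le_trans hθ (InnerProductGeometry.angle_le_pi x y)
  have hxne : x ≠ 0 := by intro h; rw [h, norm_zero] at hx; linarith
  have hyne : y ≠ 0 := by intro h; rw [h, norm_zero] at hy; linarith
  have hinner : ⟪x, y⟫ = r ^ 2 * Real.cos (InnerProductGeometry.angle x y) := by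
    rw [InnerProductGeometry.cos_angle, hx, hy]
    field_simp
  have hcos : Real.cos (InnerProductGeometry.angle x y) ≤ Real.cos θ :=
    Real.cos_le_cos_of_nonneg_of_le_pi hθ0 (InnerProductGeometry.angle_le_pi x y) hθ
  have hsq : ‖x - y‖ ^ 2 = 2 * r ^ 2 * (1 - Real.cos (InnerProductGeometry.angle x y)) := by
    rw [norm_sub_sq_real, hx, hy, hinner]; ring
  have hhalf : 1 - Real.cos θ = 2 * Real.sin (θ / 2) ^ 2 := by
    have h1 := Real.cos_sq (θ / 2)
    have h3 : 2 * (θ / 2) = θ := by ring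
    rw [h3] at h1
    have h2 := Real.sin_sq_add_cos_sq (θ / 2)
    linarith
  have hsin0 : 0 ≤ Real.sin (θ / 2) :=
    Real.sin_nonneg_of_nonneg_of_le_pi (by linarith) (by linarith [Real.pi_pos])
  have hge : (2 * r * Real.sin (θ / 2)) ^ 2 ≤ ‖x - y‖ ^ 2 := by
    rw [hsq]
    nlinarith [hcos, hhalf]
  nlinarith [norm_nonneg (x - y), mul_nonneg (mul_nonneg (by norm_num : (0:ℝ) ≤ 2) hr.le) hsin0, hge]

/-- A path on the sphere of radius `r` joining two antipodal points has length at least `π r`. -/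
theorem antipodal_path_length_ge (r : ℝ) (hr : 0 < r) (a b : ℝ) (hab : a ≤ b)
    (γ : ℝ → EuclideanSpace ℝ (Fin 3))
    (hcont : ContinuousOn γ (Set.Icc a b))
    (hsph : ∀ t ∈ Set.Icc a b, ‖γ t‖ = r)
    (hanti : γ b = -(γ a)) :
    ENNReal.ofReal (π * r) ≤ eVariationOn γ (Set.Icc a b) := by
  have ha : a ∈ Set.Icc a b := ⟨le_refl a, hab⟩
  have hb : b ∈ Set.Icc a b := ⟨hab, le_refl b⟩
  have hxa : ‖γ a‖ = r := hsph a ha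
  have hne : ∀ t ∈ Set.Icc a b, γ t ≠ 0 := by
    intro t ht h
    have := hsph t ht
    rw [h, norm_zero] at this
    linarith
  have hx0 : γ a ≠ 0 := hne a ha
  set f : ℝ → ℝ := fun t => InnerProductGeometry.angle (γ a) (γ t) with hf
  have hfc : ContinuousOn f (Set.Icc a b) := by
    intro t ht
    have hca : ContinuousAt (fun y : (EuclideanSpace ℝ (Fin 3)) × (EuclideanSpace ℝ (Fin 3)) =>
        InnerProductGeometry.angle y.1 y.2) (γ a, γ t) :=
      InnerProductGeometry.continuousAt_angle hx0 (hne t ht)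
    have hpr : ContinuousWithinAt (fun s => (γ a, γ s)) (Set.Icc a b) t :=
      ContinuousWithinAt.prodMk continuousWithinAt_const (hcont t ht)
    have h2 : ContinuousWithinAt
        ((fun y : (EuclideanSpace ℝ (Fin 3)) × (EuclideanSpace ℝ (Fin 3)) =>
          InnerProductGeometry.angle y.1 y.2) ∘ (fun s => (γ a, γ s))) (Set.Icc a b) t :=
      ContinuousAt.comp_continuousWithinAt (x := t) hca hpr
    exact h2
  have hfa : f a = 0 := InnerProductGeometry.angle_self hx0
  have hfb : f b = π := by
    simp only [hf, hanti, InnerProductGeometry.angle_neg_right,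
      InnerProductGeometry.angle_self hx0, sub_zero]
  -- main claim: for every n ≥ 2, the variation is at least n * (2 r sin(π/(2n)))
  have claim : ∀ n : ℕ, 2 ≤ n →
      ENNReal.ofReal ((n : ℝ) * (2 * r * Real.sin (π / (2 * n)))) ≤
        eVariationOn γ (Set.Icc a b) := by
    intro n hn
    have hnpos : (0 : ℝ) < n := by positivity
    set c : ℕ → ℝ := fun k => k * π / n with hc
    set S : ℕ → Set ℝ := fun k => Set.Icc a b ∩ f ⁻¹' {c k} with hS
    have hck : ∀ k : ℕ, k ≤ n → c k ∈ Set.Icc (0 : ℝ) π := by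
      intro k hk
      constructor
      · have : (0:ℝ) ≤ (k : ℝ) * π := by positivity
        exact div_nonneg this hnpos.le
      · rw [div_le_iff₀ hnpos]
        have : (k : ℝ) ≤ n := by exact_mod_cast hk
        nlinarith [Real.pi_pos]
    have hSne : ∀ k : ℕ, k ≤ n → (S k).Nonempty := by
      intro k hk
      have := intermediate_value_Icc hab hfc
      rw [hfa, hfb] at this
      obtain ⟨t, ht, hft⟩ := this (hck k hk)
      exact ⟨t, ht, hft⟩
    have hSclosed : ∀ k : ℕ, IsClosed (S k) :=
      fun k => hfc.preimage_isClosed_of_isClosed isClosed_Icc isClosed_singleton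
    have hSbdd : ∀ k : ℕ, BddBelow (S k) :=
      fun k => (bddBelow_Icc : BddBelow (Set.Icc a b)).mono (Set.inter_subset_left)
    set u : ℕ → ℝ := fun k => if k ≤ n then sInf (S k) else b with hu
    have humem : ∀ k : ℕ, k ≤ n → u k ∈ S k := by
      intro k hk
      simp only [hu, if_pos hk]
      exact (hSclosed k).csInf_mem (hSne k hk) (hSbdd k)
    have huIcc : ∀ k : ℕ, u k ∈ Set.Icc a b := by
      intro k
      by_cases hk : k ≤ n
      · exact (humem k hk).1
      · simp only [hu, if_neg hk]; exact hb
    have humono : Monotone u := by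
      apply monotone_nat_of_le_succ
      intro k
      by_cases hk1 : k + 1 ≤ n
      · have hk : k ≤ n := le_trans (Nat.le_succ k) hk1
        have h1 := humem (k + 1) hk1
        have hu1Icc : u (k + 1) ∈ Set.Icc a b := h1.1
        have hfu1 : f (u (k + 1)) = c (k + 1) := h1.2
        -- IVT on [a, u (k+1)]
        have hsub : Set.Icc a (u (k + 1)) ⊆ Set.Icc a b :=
          Set.Icc_subset_Icc le_rfl hu1Icc.2
        have := intermediate_value_Icc hu1Icc.1 (hfc.mono hsub)
        rw [hfa, hfu1] at this
        have hckmem : c k ∈ Set.Icc (0 : ℝ) (c (k + 1)) := by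
          constructor
          · exact (hck k hk).1
          · simp only [hc]
            rw [div_le_div_iff₀ hnpos hnpos]
            push_cast
            nlinarith [Real.pi_pos]
        obtain ⟨t, ht, hft⟩ := this hckmem
        have htS : t ∈ S k := ⟨hsub ht, hft⟩
        have : u k ≤ t := by
          simp only [hu, if_pos hk]
          exact csInf_le (hSbdd k) htS
        exact le_trans this ht.2
      · have hu1 : u (k + 1) = b := by simp only [hu, if_neg hk1]
        rw [hu1]
        exact (huIcc k).2
    -- sum lower bound
    have hsum := eVariationOn.sum_le (f := γ) (n := n) humono huIcc
    refine le_trans ?_ hsum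
    have hterm : ∀ i ∈ Finset.range n,
        ENNReal.ofReal (2 * r * Real.sin (π / (2 * n))) ≤ edist (γ (u (i + 1))) (γ (u i)) := by
      intro i hi
      rw [Finset.mem_range] at hi
      have hin : i ≤ n := hi.le
      have hi1n : i + 1 ≤ n := hi
      have hs := humem i hin
      have ht := humem (i + 1) hi1n
      have hfs : f (u i) = c i := hs.2
      have hft : f (u (i + 1)) = c (i + 1) := ht.2
      -- angle between consecutive points is at least π/n
      have htri := aux_angle_triangle_r hr hxa (hsph (u i) hs.1) (hsph (u (i + 1)) ht.1)
      have hdiff : c (i + 1) - c i = π / n := by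
        simp only [hc]; push_cast; ring
      have hangle_ge : π / n ≤ InnerProductGeometry.angle (γ (u i)) (γ (u (i + 1))) := by
        have : f (u (i + 1)) ≤ f (u i) + InnerProductGeometry.angle (γ (u i)) (γ (u (i + 1))) := htri
        rw [hfs, hft] at this
        linarith [hdiff]
      have hchord := aux_chord_ge hr (hsph (u (i+1)) ht.1) (hsph (u i) hs.1)
        (θ := π / n) (by positivity) (by
          rwa [InnerProductGeometry.angle_comm] at hangle_ge)
      have hhalf : π / n / 2 = π / (2 * n) := by ring
      rw [hhalf] at hchord
      rw [edist_dist, dist_eq_norm]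
      exact ENNReal.ofReal_le_ofReal hchord
    calc ENNReal.ofReal ((n : ℝ) * (2 * r * Real.sin (π / (2 * n))))
        = ∑ _i ∈ Finset.range n, ENNReal.ofReal (2 * r * Real.sin (π / (2 * n))) := by
          rw [Finset.sum_const, Finset.card_range, nsmul_eq_mul,
            ← ENNReal.ofReal_natCast, ← ENNReal.ofReal_mul (by positivity)]
      _ ≤ ∑ i ∈ Finset.range n, edist (γ (u (i + 1))) (γ (u i)) :=
          Finset.sum_le_sum hterm
  -- conclude by taking n large
  apply ENNReal.le_of_forall_pos_le_add
  intro ε hε _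
  have hεR : (0 : ℝ) < (ε : ℝ) := hε
  obtain ⟨m, hm⟩ := exists_nat_gt (r * π ^ 3 / (16 * ε))
  set n : ℕ := max 2 m with hn
  have hn2 : 2 ≤ n := le_max_left 2 m
  have hnm : m ≤ n := le_max_right 2 m
  have hnpos : (0 : ℝ) < n := by positivity
  have hnR : (2 : ℝ) ≤ n := by exact_mod_cast hn2
  -- key numeric estimate: π * r ≤ n * (2 r sin(π/(2n))) + ε
  have hkey : π * r ≤ (n : ℝ) * (2 * r * Real.sin (π / (2 * n))) + ε := by
    set x : ℝ := π / (2 * n) with hx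
    have hx0 : 0 < x := by positivity
    have hx1 : x ≤ 1 := by
      rw [hx, div_le_one (by positivity)]
      nlinarith [Real.pi_lt_d2]
    have hsin : x - x ^ 3 / 4 < Real.sin x := by
      have := Real.sin_gt_sub_cube hx0; nlinarith [pow_pos hx0 3]
    have hxval : (n : ℝ) * (2 * r * x) = π * r := by
      rw [hx]; field_simp
    have hcube : (n : ℝ) * (2 * r * (x ^ 3 / 4)) ≤ ε := by
      have hxle : x ≤ π / (2 * 2) := by
        rw [hx]
        apply div_le_div_of_nonneg_left Real.pi_pos.le (by norm_num) (by nlinarith)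
      -- n * 2r * x^3/4 = n * 2 r * (π/(2n))^3/4 = r π^3 / (16 n^2)
      have hxcube : (n : ℝ) * (2 * r * (x ^ 3 / 4)) = r * π ^ 3 / (16 * n ^ 2) := by
        rw [hx]; field_simp; ring
      rw [hxcube]
      have hmn : r * π ^ 3 / (16 * ε) < n := lt_of_lt_of_le hm (by exact_mod_cast hnm)
      have hn2le : (n : ℝ) ≤ (n : ℝ) ^ 2 := by nlinarith
      rw [div_le_iff₀ (by positivity)]
      have : r * π ^ 3 < 16 * ε * n := by
        rw [div_lt_iff₀ (by positivity)] at hmn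
        linarith
      nlinarith [Real.pi_pos, hr]
    nlinarith [hsin, mul_pos hnpos (by positivity : (0:ℝ) < 2 * r)]
  calc ENNReal.ofReal (π * r)
      ≤ ENNReal.ofReal ((n : ℝ) * (2 * r * Real.sin (π / (2 * n))) + ε) :=
        ENNReal.ofReal_le_ofReal hkey
    _ ≤ ENNReal.ofReal ((n : ℝ) * (2 * r * Real.sin (π / (2 * n)))) + ENNReal.ofReal ε :=
        ENNReal.ofReal_add_le
    _ ≤ eVariationOn γ (Set.Icc a b) + ε := by
        rw [ENNReal.ofReal_coe_nnreal]
        exact add_le_add (claim n hn2) le_rfl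
end

section
/- Non-antipodal endpoints for short spherical curves: Let r > 0 and L < π r, and let γ : [a, b] → ℝ³ (EuclideanSpace ℝ (Fin 3)) be a continuous path with ‖γ t‖ = r for all t ∈ [a, b] whose length (total variation eVariationOn γ [a, b]) is at most L. Then γ b ≠ −(γ a), i.e. the endpoints of γ are not antipodal. -/
open Real

local notation "⟪" x ", " y "⟫" => @inner ℝ _ _ x y

private lemma inner_le_of_angles' {E : Type*} [NormedAddCommGroup E] [InnerProductSpace ℝ E]
    {r : ℝ} (hr : 0 < r) {x y z : E} (hx : ‖x‖ = r) (hy : ‖y‖ = r) (hz : ‖z‖ = r)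
    {α β : ℝ} (hα : α ∈ Set.Icc 0 π) (hβ : β ∈ Set.Icc 0 π)
    (hzx : ⟪z, x⟫ = r ^ 2 * Real.cos α) (hzy : ⟪z, y⟫ = r ^ 2 * Real.cos β) :
    ⟪x, y⟫ ≤ r ^ 2 * Real.cos (α - β) := by
  have hxz : ⟪x, z⟫ = r ^ 2 * Real.cos α := by rw [real_inner_comm]; exact hzx
  have hyz : ⟪y, z⟫ = r ^ 2 * Real.cos β := by rw [real_inner_comm]; exact hzy
  have hxx : ⟪x, x⟫ = r ^ 2 := by rw [real_inner_self_eq_norm_sq, hx]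
  have hyy : ⟪y, y⟫ = r ^ 2 := by rw [real_inner_self_eq_norm_sq, hy]
  have hzz : ⟪z, z⟫ = r ^ 2 := by rw [real_inner_self_eq_norm_sq, hz]
  set x' : E := x - Real.cos α • z with hx'
  set y' : E := y - Real.cos β • z with hy'
  have h1 : ⟪x', x'⟫ = (r * Real.sin α) ^ 2 := by
    simp only [hx', inner_sub_left, inner_sub_right, real_inner_smul_left, real_inner_smul_right,
      hxx, hzz, hxz, hzx]
    nlinarith [Real.sin_sq_add_cos_sq α]
  have h2 : ⟪y', y'⟫ = (r * Real.sin β) ^ 2 := by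
    simp only [hy', inner_sub_left, inner_sub_right, real_inner_smul_left, real_inner_smul_right,
      hyy, hzz, hyz, hzy]
    nlinarith [Real.sin_sq_add_cos_sq β]
  have hnx' : ‖x'‖ = r * Real.sin α := by
    have hsq : ‖x'‖ ^ 2 = (r * Real.sin α) ^ 2 := by rw [← real_inner_self_eq_norm_sq]; exact h1
    have h0 : 0 ≤ r * Real.sin α := mul_nonneg hr.le (Real.sin_nonneg_of_mem_Icc hα)
    have h3 := congrArg Real.sqrt hsq
    rwa [Real.sqrt_sq (norm_nonneg _), Real.sqrt_sq h0] at h3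
  have hny' : ‖y'‖ = r * Real.sin β := by
    have hsq : ‖y'‖ ^ 2 = (r * Real.sin β) ^ 2 := by rw [← real_inner_self_eq_norm_sq]; exact h2
    have h0 : 0 ≤ r * Real.sin β := mul_nonneg hr.le (Real.sin_nonneg_of_mem_Icc hβ)
    have h3 := congrArg Real.sqrt hsq
    rwa [Real.sqrt_sq (norm_nonneg _), Real.sqrt_sq h0] at h3
  have hxy : ⟪x, y⟫ = ⟪x', y'⟫ + r ^ 2 * (Real.cos α * Real.cos β) := by
    simp only [hx', hy', inner_sub_left, inner_sub_right, real_inner_smul_left,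
      real_inner_smul_right, hzz, hxz, hzy]
    ring
  have hCS : ⟪x', y'⟫ ≤ ‖x'‖ * ‖y'‖ := real_inner_le_norm x' y'
  rw [hxy, Real.cos_sub]
  rw [hnx', hny'] at hCS
  nlinarith [hCS]

set_option maxHeartbeats 1000000

/-- Non-antipodal endpoints for short spherical curves: a path on the sphere of radius `r` of
length at most `L < π r` cannot join antipodal points. -/
theorem short_spherical_path_not_antipodal (r L : ℝ) (hr : 0 < r) (hL : L < π * r)
    (a b : ℝ) (hab : a ≤ b)
    (γ : ℝ → EuclideanSpace ℝ (Fin 3))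
    (hcont : ContinuousOn γ (Set.Icc a b))
    (hsph : ∀ t ∈ Set.Icc a b, ‖γ t‖ = r)
    (hlen : eVariationOn γ (Set.Icc a b) ≤ ENNReal.ofReal L) :
    γ b ≠ -(γ a) := by
  intro hanti
  have ha : a ∈ Set.Icc a b := ⟨le_refl a, hab⟩
  have hb : b ∈ Set.Icc a b := ⟨hab, le_refl b⟩
  have hra : ‖γ a‖ = r := hsph a ha
  have hπr : 0 < π * r - L := by linarith
  obtain ⟨n, hn⟩ := exists_nat_gt (max 2 (π ^ 3 * r / (16 * (π * r - L))))
  have hn2 : (2 : ℝ) ≤ (n : ℝ) := le_of_lt (lt_of_le_of_lt (le_max_left _ _) hn)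
  have hnpos : (0 : ℝ) < (n : ℝ) := by linarith
  have hne : (n : ℝ) ≠ 0 := ne_of_gt hnpos
  have hπ : (0 : ℝ) < π := Real.pi_pos
  -- the key numeric inequality
  have hkey : L < (n : ℝ) * (2 * r * Real.sin (π / (2 * n))) := by
    set x : ℝ := π / (2 * n) with hxdef
    have hxpos : 0 < x := by positivity
    have hxle1 : x ≤ 1 := by
      rw [hxdef, div_le_one (by positivity)]
      nlinarith [Real.pi_le_four]
    have hsin : x - x ^ 3 / 4 < Real.sin x := by
      have := Real.sin_gt_sub_cube hxpos; linarith [pow_pos hxpos 3]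
    have hn' : π ^ 3 * r / (16 * (π * r - L)) < (n : ℝ) :=
      lt_of_le_of_lt (le_max_right _ _) hn
    have h3 : π ^ 3 * r < (n : ℝ) * (16 * (π * r - L)) := by
      rwa [div_lt_iff₀ (by positivity)] at hn'
    have e1 : (n : ℝ) * (2 * r * (x - x ^ 3 / 4)) = π * r - r * π ^ 3 / (16 * n ^ 2) := by
      rw [hxdef]; field_simp; ring
    have e2 : r * π ^ 3 / (16 * (n : ℝ) ^ 2) ≤ r * π ^ 3 / (16 * n) := by
      rw [div_le_div_iff₀ (by positivity) (by positivity)]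
      nlinarith [mul_nonneg (mul_nonneg hr.le (pow_nonneg hπ.le 3))
        (by nlinarith : (0:ℝ) ≤ (n:ℝ) ^ 2 - n)]
    have e3 : r * π ^ 3 / (16 * (n : ℝ)) < π * r - L := by
      rw [div_lt_iff₀ (by positivity)]; nlinarith
    have e4 : (n : ℝ) * (2 * r * (x - x ^ 3 / 4)) < (n : ℝ) * (2 * r * Real.sin x) := by
      apply mul_lt_mul_of_pos_left _ hnpos
      exact mul_lt_mul_of_pos_left hsin (by positivity)
    linarith [e1 ▸ e4]
  -- the inner-product function
  set g : ℝ → ℝ := fun s => ⟪γ a, γ s⟫ with hgdef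
  have hgcont : ContinuousOn g (Set.Icc a b) := continuousOn_const.inner hcont
  have hga : g a = r ^ 2 := by
    simp only [hgdef, real_inner_self_eq_norm_sq, hra]
  have hgb : g b = -(r ^ 2) := by
    simp only [hgdef, hanti, inner_neg_right, real_inner_self_eq_norm_sq, hra]
  -- angles and levels
  set θ : ℕ → ℝ := fun k => ((min k n : ℕ) : ℝ) * π / n with hθdef
  have hθmem : ∀ k, θ k ∈ Set.Icc 0 π := by
    intro k
    have h1 : ((min k n : ℕ) : ℝ) ≤ (n : ℝ) := by exact_mod_cast min_le_right k n
    have h0 : (0 : ℝ) ≤ ((min k n : ℕ) : ℝ) := Nat.cast_nonneg _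
    refine ⟨?_, ?_⟩
    · show (0:ℝ) ≤ ((min k n : ℕ) : ℝ) * π / n
      positivity
    · show ((min k n : ℕ) : ℝ) * π / n ≤ π
      rw [div_le_iff₀ hnpos]; nlinarith
  set c : ℕ → ℝ := fun k => r ^ 2 * Real.cos (θ k) with hcdef
  set S : ℕ → Set ℝ := fun k => {s | s ∈ Set.Icc a b ∧ g s ≤ c k} with hSdef
  have hSb : ∀ k, b ∈ S k := by
    intro k
    refine ⟨hb, ?_⟩
    rw [hgb]
    simp only [hcdef]
    nlinarith [Real.neg_one_le_cos (θ k), sq_nonneg r]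
  have hSclosed : ∀ k, IsClosed (S k) := by
    intro k
    have : S k = Set.Icc a b ∩ g ⁻¹' Set.Iic (c k) := by
      ext s; simp [hSdef]
    rw [this]
    exact hgcont.preimage_isClosed_of_isClosed isClosed_Icc isClosed_Iic
  have hSbdd : ∀ k, BddBelow (S k) := fun k => ⟨a, fun s hs => hs.1.1⟩
  set t : ℕ → ℝ := fun k => sInf (S k) with htdef
  have htmem : ∀ k, t k ∈ S k := fun k => (hSclosed k).csInf_mem ⟨b, hSb k⟩ (hSbdd k)
  have htIcc : ∀ k, t k ∈ Set.Icc a b := fun k => (htmem k).1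
  have hmono : Monotone t := by
    intro k l hkl
    apply csInf_le_csInf (hSbdd k) ⟨b, hSb l⟩
    intro s hs
    refine ⟨hs.1, le_trans hs.2 ?_⟩
    have h1 : θ k ≤ θ l := by
      have h2 : ((min k n : ℕ) : ℝ) ≤ ((min l n : ℕ) : ℝ) :=
        Nat.cast_le.mpr (min_le_min hkl (le_refl n))
      show ((min k n : ℕ) : ℝ) * π / n ≤ ((min l n : ℕ) : ℝ) * π / n
      gcongr
    have h2 := Real.cos_le_cos_of_nonneg_of_le_pi (hθmem k).1 (hθmem l).2 h1
    simp only [hcdef]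
    nlinarith [sq_nonneg r]
  have hgt : ∀ k, g (t k) = c k := by
    intro k
    have hck : c k ∈ Set.Icc (g (t k)) (g a) := by
      refine ⟨(htmem k).2, ?_⟩
      rw [hga]
      simp only [hcdef]
      nlinarith [Real.cos_le_one (θ k), sq_nonneg r]
    obtain ⟨s, hs, hgs⟩ := intermediate_value_Icc' (htIcc k).1
      (hgcont.mono (Set.Icc_subset_Icc_right (htIcc k).2)) hck
    have hsS : s ∈ S k := ⟨⟨hs.1, hs.2.trans (htIcc k).2⟩, le_of_eq hgs⟩
    have h1 : t k ≤ s := csInf_le (hSbdd k) hsS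
    have h2 : s = t k := le_antisymm hs.2 h1
    rw [← h2, hgs]
  -- chord lower bound
  have hsin0 : 0 ≤ Real.sin (π / (2 * n)) :=
    Real.sin_nonneg_of_nonneg_of_le_pi (by positivity)
      ((div_le_self hπ.le (by linarith)))
  have hchord : ∀ i : ℕ, i < n →
      ENNReal.ofReal (2 * r * Real.sin (π / (2 * n))) ≤ edist (γ (t (i + 1))) (γ (t i)) := by
    intro i hi
    have hmin1 : min (i + 1) n = i + 1 := min_eq_left (Nat.succ_le_of_lt hi)
    have hmin0 : min i n = i := min_eq_left (le_of_lt hi)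
    have hni : ‖γ (t i)‖ = r := hsph _ (htIcc i)
    have hni1 : ‖γ (t (i + 1))‖ = r := hsph _ (htIcc (i + 1))
    have hzx : ⟪γ a, γ (t (i + 1))⟫ = r ^ 2 * Real.cos (θ (i + 1)) := by
      have h := hgt (i + 1); simpa only [hgdef, hcdef] using h
    have hzy : ⟪γ a, γ (t i)⟫ = r ^ 2 * Real.cos (θ i) := by
      have h := hgt i; simpa only [hgdef, hcdef] using h
    have hinner := inner_le_of_angles' hr hni1 hni hra (hθmem (i + 1)) (hθmem i) hzx hzy
    have hdiff : θ (i + 1) - θ i = π / n := by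
      simp only [hθdef, hmin1, hmin0]
      push_cast
      field_simp
      ring
    rw [hdiff] at hinner
    have hnorm : ‖γ (t (i + 1)) - γ (t i)‖ ^ 2
        = 2 * r ^ 2 - 2 * ⟪γ (t (i + 1)), γ (t i)⟫ := by
      rw [@norm_sub_sq_real, hni1, hni]; ring
    have hhalf : Real.cos (π / n) = 1 - 2 * Real.sin (π / (2 * n)) ^ 2 := by
      have h2 : π / (n : ℝ) = 2 * (π / (2 * n)) := by field_simp
      rw [h2, Real.cos_two_mul]
      nlinarith [Real.sin_sq_add_cos_sq (π / (2 * (n : ℝ)))]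
    obtain ⟨I, hI⟩ : ∃ I : ℝ, ⟪γ (t (i + 1)), γ (t i)⟫ = I := ⟨_, rfl⟩
    rw [hI] at hnorm hinner
    have hcos : r ^ 2 * Real.cos (π / n) = r ^ 2 - 2 * (r * Real.sin (π / (2 * n))) ^ 2 := by
      rw [hhalf]; ring
    have hsq : (2 * r * Real.sin (π / (2 * n))) ^ 2 ≤ ‖γ (t (i + 1)) - γ (t i)‖ ^ 2 := by
      rw [hnorm]; nlinarith [hinner, hcos]
    have hle : 2 * r * Real.sin (π / (2 * n)) ≤ ‖γ (t (i + 1)) - γ (t i)‖ := by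
      have h4 := Real.sqrt_le_sqrt hsq
      rwa [Real.sqrt_sq (by positivity), Real.sqrt_sq (norm_nonneg _)] at h4
    rw [edist_dist, dist_eq_norm]
    exact ENNReal.ofReal_le_ofReal hle
  -- sum over the partition
  have hsum := eVariationOn.sum_le (f := γ) (n := n) hmono htIcc
  have hsum2 : (n : ENNReal) * ENNReal.ofReal (2 * r * Real.sin (π / (2 * n)))
      ≤ ∑ i ∈ Finset.range n, edist (γ (t (i + 1))) (γ (t i)) := by
    calc (n : ENNReal) * ENNReal.ofReal (2 * r * Real.sin (π / (2 * n)))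
        = ∑ _i ∈ Finset.range n, ENNReal.ofReal (2 * r * Real.sin (π / (2 * n))) := by
          rw [Finset.sum_const, Finset.card_range, nsmul_eq_mul]
      _ ≤ _ := Finset.sum_le_sum (fun i hi => hchord i (Finset.mem_range.mp hi))
  have hfin : ENNReal.ofReal ((n : ℝ) * (2 * r * Real.sin (π / (2 * n))))
      ≤ ENNReal.ofReal L := by
    calc ENNReal.ofReal ((n : ℝ) * (2 * r * Real.sin (π / (2 * n))))
        = (n : ENNReal) * ENNReal.ofReal (2 * r * Real.sin (π / (2 * n))) := by
          rw [ENNReal.ofReal_mul (Nat.cast_nonneg n), ENNReal.ofReal_natCast]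
      _ ≤ ∑ i ∈ Finset.range n, edist (γ (t (i + 1))) (γ (t i)) := hsum2
      _ ≤ eVariationOn γ (Set.Icc a b) := hsum
      _ ≤ ENNReal.ofReal L := hlen
  have hsinpos : 0 < Real.sin (π / (2 * n)) :=
    Real.sin_pos_of_pos_of_lt_pi (by positivity) (div_lt_self hπ (by linarith))
  have hppos : 0 < (n : ℝ) * (2 * r * Real.sin (π / (2 * n))) :=
    mul_pos hnpos (mul_pos (by linarith) hsinpos)
  rcases ENNReal.ofReal_le_ofReal_iff'.mp hfin with h | h
  · linarith
  · linarith
end
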